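/- arXiv:2604.25669 — 4 statements merged into one kernel-verified Lean document; each statement's English description precedes it below -/
import Mathlib

section
/- Let K be a compact strictly convex subset of Euclidean space ℝ³ with 0 ∈ frontier K. Then for all real numbers λ, μ with 0 < λ < μ ≤ 1, the intersection (λ • frontier K) ∩ (μ • frontier K) equals the singleton {0}. -/
open scoped Pointwise

/-- For a compact strictly convex `K ⊆ ℝ³` with `0 ∈ frontier K`, distinct
dilates `λ • frontier K` and `μ • frontier K` with `0 < λ < μ ≤ 1` meet exactly in `{0}`. -/
theorem stmt_1 (K : Set (EuclideanSpace ℝ (Fin 3))) (hcpt : IsCompact K)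
    (hsc : StrictConvex ℝ K) (h0 : (0 : EuclideanSpace ℝ (Fin 3)) ∈ frontier K) :
    ∀ lam mu : ℝ, 0 < lam → lam < mu → mu ≤ 1 →
      (lam • frontier K) ∩ (mu • frontier K) = {0} := by
  intro lam mu hl hlm hm1
  have hK : IsClosed K := hcpt.isClosed
  have hfK : frontier K ⊆ K := hK.frontier_subset
  have hmu0 : (0:ℝ) < mu := hl.trans hlm
  ext x
  simp only [Set.mem_inter_iff, Set.mem_singleton_iff]
  constructor
  · rintro ⟨⟨a, ha, rfl⟩, ⟨b, hb, hab⟩⟩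
    by_contra hx
    have ha0 : a ≠ 0 := by rintro rfl; simp at hx
    have hb_eq : b = (lam / mu) • a := by
      have h : mu • b = lam • a := hab
      have : (mu⁻¹ * mu) • b = (mu⁻¹ * lam) • a := by
        rw [mul_smul, mul_smul, h]
      simpa [inv_mul_cancel₀ hmu0.ne', div_eq_inv_mul] using this
    have h1 : (0:ℝ) < lam / mu := div_pos hl hmu0
    have h2 : lam / mu < 1 := (div_lt_one hmu0).2 hlm
    have hint := hsc (hfK ha) (hfK h0) ha0 h1 (by linarith : (0:ℝ) < 1 - lam / mu)
      (by ring)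
    have hbint : b ∈ interior K := by
      simpa [hb_eq] using hint
    have := hb
    rw [frontier, Set.mem_diff] at this
    exact this.2 hbint
  · rintro rfl
    exact ⟨⟨0, h0, smul_zero _⟩, ⟨0, h0, smul_zero _⟩⟩
end

section
/- Let K be a nonempty compact convex subset of Euclidean space ℝ³ with 0 ∈ K. Then the Lebesgue (outer) measure of the union ⋃_{λ ∈ (1/2, 3/4]} λ • (frontier K) is at least (19/64) times the Lebesgue measure of K; in particular, if K has nonempty interior, this union has strictly positive measure. -/
open MeasureTheory
open scoped Pointwise
open scoped ENNReal

section aux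

variable {K : Set (EuclideanSpace ℝ (Fin 3))}

lemma aux_smul_frontier {l : ℝ} (hl : l ≠ 0) (K : Set (EuclideanSpace ℝ (Fin 3))) :
    frontier (l • K) = l • frontier K := by
  unfold frontier
  rw [closure_smul₀' hl, interior_smul₀ hl]
  ext x
  simp only [frontier, Set.mem_diff, Set.mem_smul_set_iff_inv_smul_mem₀ hl]

lemma aux_mono (hconv : Convex ℝ K) (h0 : (0 : EuclideanSpace ℝ (Fin 3)) ∈ K)
    {a b : ℝ} (ha : 0 < a) (hab : a ≤ b) : a • K ⊆ b • K := by
  rintro _ ⟨z, hz, rfl⟩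
  have hb : 0 < b := lt_of_lt_of_le ha hab
  refine Set.mem_smul_set.2 ⟨(a / b) • z, hconv.smul_mem_of_zero_mem h0 hz ⟨by positivity, by
    rw [div_le_one hb]; exact hab⟩, ?_⟩
  rw [smul_smul, mul_div_cancel₀ _ hb.ne']

lemma aux_incl (hcpt : IsCompact K) (hconv : Convex ℝ K)
    (h0 : (0 : EuclideanSpace ℝ (Fin 3)) ∈ K) :
    ((3 / 4 : ℝ) • K) \ ((1 / 2 : ℝ) • K) ⊆
      ⋃ lam ∈ Set.Ioc (1 / 2 : ℝ) (3 / 4), lam • frontier K := by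
  rintro x ⟨hx3, hx2⟩
  set A : Set ℝ := {l | l ∈ Set.Ioc (1 / 2 : ℝ) (3 / 4) ∧ x ∈ l • K} with hA
  have hAne : (3 / 4 : ℝ) ∈ A := ⟨⟨by norm_num, le_refl _⟩, hx3⟩
  have hbdd : BddBelow A := ⟨1 / 2, fun l hl => hl.1.1.le⟩
  set l0 := sInf A with hl0def
  have hl0half : (1 / 2 : ℝ) ≤ l0 := le_csInf ⟨_, hAne⟩ fun l hl => hl.1.1.le
  have hl0pos : (0 : ℝ) < l0 := lt_of_lt_of_le (by norm_num) hl0half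
  have hl0le : l0 ≤ 3 / 4 := csInf_le hbdd hAne
  -- x ∈ l • K for all l ∈ (l0, 3/4]
  have hmem : ∀ l : ℝ, l0 < l → l ≤ 3 / 4 → x ∈ l • K := by
    intro l hl hl34
    obtain ⟨a, haA, hal⟩ := exists_lt_of_csInf_lt ⟨_, hAne⟩ hl
    exact aux_mono hconv h0 (lt_of_lt_of_le (by norm_num) haA.1.1.le) hal.le haA.2
  -- x ∈ l0 • K by closedness
  have hxl0 : x ∈ l0 • K := by
    rcases eq_or_lt_of_le hl0le with h | h
    · rw [h]; exact hx3
    · rw [Set.mem_smul_set_iff_inv_smul_mem₀ hl0pos.ne']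
      have hcl : IsClosed K := hcpt.isClosed
      have htend : Filter.Tendsto (fun l : ℝ => l⁻¹ • x) (nhdsWithin l0 (Set.Ioi l0))
          (nhds (l0⁻¹ • x)) := by
        apply Filter.Tendsto.mono_left _ nhdsWithin_le_nhds
        exact ((continuousAt_inv₀ hl0pos.ne').smul continuousAt_const)
      refine hcl.mem_of_tendsto htend ?_
      filter_upwards [Ioo_mem_nhdsGT_of_mem ⟨le_refl _, h⟩] with l hl
      have := hmem l hl.1 hl.2.le
      rwa [Set.mem_smul_set_iff_inv_smul_mem₀ (lt_trans hl0pos hl.1).ne'] at this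
  -- l0 > 1/2
  have hl0gt : (1 / 2 : ℝ) < l0 := by
    rcases eq_or_lt_of_le hl0half with h | h
    · exact absurd (h ▸ hxl0) hx2
    · exact h
  -- x not in interior (l0 • K)
  have hxne : x ≠ 0 := by
    rintro rfl
    exact hx2 ⟨0, h0, by simp⟩
  have hnotint : x ∉ interior (l0 • K) := by
    intro hint
    obtain ⟨r, hr, hball⟩ := Metric.isOpen_iff.1 isOpen_interior x hint
    have hxnorm : (0 : ℝ) < ‖x‖ := norm_pos_iff.2 hxne
    have hm0 : (0 : ℝ) < (2 * l0 - 1) / 2 := by linarith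
    set ε := min (r / (2 * ‖x‖)) ((2 * l0 - 1) / 2) with hεdef
    have hε0 : 0 < ε := lt_min (by positivity) hm0
    have hε1 : ε * ‖x‖ < r := by
      calc ε * ‖x‖ ≤ r / (2 * ‖x‖) * ‖x‖ :=
            mul_le_mul_of_nonneg_right (min_le_left _ _) hxnorm.le
        _ = r / 2 := by field_simp
        _ < r := by linarith
    have hεle : ε ≤ (2 * l0 - 1) / 2 := min_le_right _ _
    have hε2 : 1 / 2 < l0 / (1 + ε) := by
      rw [lt_div_iff₀ (by linarith)]
      nlinarith
    have hin : (1 + ε) • x ∈ l0 • K := by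
      apply interior_subset
      apply hball
      rw [Metric.mem_ball]
      have : (1 + ε) • x - x = ε • x := by
        rw [add_smul, one_smul]; abel
      rw [dist_eq_norm, this, norm_smul, Real.norm_eq_abs, abs_of_pos hε0]
      exact hε1
    have hx' : x ∈ (l0 / (1 + ε)) • K := by
      obtain ⟨z, hz, hzeq⟩ := Set.mem_smul_set.1 hin
      refine Set.mem_smul_set.2 ⟨z, hz, ?_⟩
      have h1ε : (1 + ε) ≠ 0 := by positivity
      rw [div_eq_inv_mul, mul_smul, hzeq, smul_smul, inv_mul_cancel₀ h1ε, one_smul]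
    have hAmem : (l0 / (1 + ε)) ∈ A := by
      refine ⟨⟨hε2, ?_⟩, hx'⟩
      calc l0 / (1 + ε) ≤ l0 / 1 := by
            apply div_le_div_of_nonneg_left hl0pos.le one_pos; linarith
        _ = l0 := div_one _
        _ ≤ 3 / 4 := hl0le
    have : l0 ≤ l0 / (1 + ε) := csInf_le hbdd hAmem
    have hlt : l0 / (1 + ε) < l0 := by
      rw [div_lt_iff₀ (by positivity)]
      nlinarith
    linarith
  have hfr : x ∈ frontier (l0 • K) := ⟨subset_closure hxl0, hnotint⟩
  rw [aux_smul_frontier hl0pos.ne'] at hfr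
  exact Set.mem_biUnion ⟨hl0gt, hl0le⟩ hfr

end aux

/-- For a nonempty compact convex `K ⊆ ℝ³` with `0 ∈ K`, the union of the
dilates `λ • frontier K` over `λ ∈ (1/2, 3/4]` has (outer) volume at least
`(19/64) · volume K`; in particular if `K` has nonempty interior this union has strictly
positive measure. -/
theorem stmt_4 (K : Set (EuclideanSpace ℝ (Fin 3))) (hne : K.Nonempty)
    (hcpt : IsCompact K) (hconv : Convex ℝ K)
    (h0 : (0 : EuclideanSpace ℝ (Fin 3)) ∈ K) :
    (19 / 64 : ℝ≥0∞) * volume K ≤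
        volume (⋃ lam ∈ Set.Ioc (1 / 2 : ℝ) (3 / 4), lam • frontier K) ∧
      ((interior K).Nonempty →
        0 < volume (⋃ lam ∈ Set.Ioc (1 / 2 : ℝ) (3 / 4), lam • frontier K)) := by
  have hK2cpt : IsCompact ((1 / 2 : ℝ) • K) := hcpt.smul _
  have hK2meas : NullMeasurableSet ((1 / 2 : ℝ) • K) volume :=
    (hK2cpt.isClosed.measurableSet).nullMeasurableSet
  have hK2fin : volume ((1 / 2 : ℝ) • K) ≠ ∞ := hK2cpt.measure_lt_top.ne
  have hsub : ((1 / 2 : ℝ) • K) ⊆ ((3 / 4 : ℝ) • K) :=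
    aux_mono hconv h0 (by norm_num) (by norm_num)
  have hdiff : volume (((3 / 4 : ℝ) • K) \ ((1 / 2 : ℝ) • K)) =
      volume ((3 / 4 : ℝ) • K) - volume ((1 / 2 : ℝ) • K) :=
    measure_diff hsub hK2meas hK2fin
  have h34 : volume ((3 / 4 : ℝ) • K) = (27 / 64 : ℝ≥0∞) * volume K := by
    rw [Measure.addHaar_smul_of_nonneg volume (by norm_num : (0:ℝ) ≤ 3/4) K]
    congr 1
    rw [finrank_euclideanSpace, Fintype.card_fin]
    rw [show ((3:ℝ)/4)^3 = 27/64 by norm_num]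
    rw [ENNReal.ofReal_div_of_pos (by norm_num)]
    norm_num
  have h12 : volume ((1 / 2 : ℝ) • K) = (8 / 64 : ℝ≥0∞) * volume K := by
    rw [Measure.addHaar_smul_of_nonneg volume (by norm_num : (0:ℝ) ≤ 1/2) K]
    congr 1
    rw [finrank_euclideanSpace, Fintype.card_fin]
    rw [show ((1:ℝ)/2)^3 = 8/64 by norm_num]
    rw [ENNReal.ofReal_div_of_pos (by norm_num)]
    norm_num
  have hmain : (19 / 64 : ℝ≥0∞) * volume K ≤
      volume (⋃ lam ∈ Set.Ioc (1 / 2 : ℝ) (3 / 4), lam • frontier K) := by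
    refine le_trans ?_ (measure_mono (aux_incl hcpt hconv h0))
    rw [hdiff, h34, h12]
    apply ENNReal.le_sub_of_add_le_right
      (ENNReal.mul_ne_top (ENNReal.div_lt_top (by norm_num) (by norm_num)).ne
        hcpt.measure_lt_top.ne)
    rw [← add_mul]
    refine mul_le_mul_left (le_of_eq ?_) _
    rw [ENNReal.div_add_div_same]
    norm_num
  refine ⟨hmain, fun hint => ?_⟩
  have hKpos : 0 < volume K := Measure.measure_pos_of_nonempty_interior volume hint
  calc (0 : ℝ≥0∞) < (19 / 64 : ℝ≥0∞) * volume K := by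
        apply ENNReal.mul_pos _ hKpos.ne'
        simp
    _ ≤ _ := hmain
end

section
/- In Euclidean space ℝ³ with coordinates (y₁, y₂, z), let E := {(y₁, y₂, z) : (y₁² + y₂²)/4 ≤ z} be the closed solid paraboloid region and let K := E ∩ B̄((0,0,4), 4), where B̄((0,0,4), 4) is the closed Euclidean ball of radius 4 centred at (0,0,4). Then K is compact, K is strictly convex (for all distinct x, y ∈ K and a, b > 0 with a + b = 1, a•x + b•y lies in the interior of K), K has nonempty interior, and the origin 0 belongs to the frontier of K. -/
open Metric

/-- The clam-shaped body `K`, the intersection of the solid paraboloid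
`{(y₁,y₂,z) : (y₁² + y₂²)/4 ≤ z}` with the closed ball of radius 4 centred at `(0,0,4)`,
is compact, strictly convex, has nonempty interior, and has `0` on its frontier. -/
theorem stmt_6
    (E : Set (EuclideanSpace ℝ (Fin 3)))
    (hE : E = {x : EuclideanSpace ℝ (Fin 3) | (x 0 ^ 2 + x 1 ^ 2) / 4 ≤ x 2})
    (K : Set (EuclideanSpace ℝ (Fin 3)))
    (hK : K = E ∩ Metric.closedBall ((EuclideanSpace.equiv (Fin 3) ℝ).symm ![0, 0, 4]) 4) :
    IsCompact K ∧ StrictConvex ℝ K ∧ (interior K).Nonempty ∧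
      (0 : EuclideanSpace ℝ (Fin 3)) ∈ frontier K := by
  have hcont : ∀ i : Fin 3, Continuous fun x : EuclideanSpace ℝ (Fin 3) => x i :=
    fun i => (EuclideanSpace.proj i : EuclideanSpace ℝ (Fin 3) →L[ℝ] ℝ).continuous
  set c : EuclideanSpace ℝ (Fin 3) := (EuclideanSpace.equiv (Fin 3) ℝ).symm ![0, 0, 4] with hcdef
  have hc0 : c 0 = 0 := rfl
  have hc1 : c 1 = 0 := rfl
  have hc2 : c 2 = 4 := rfl
  have hf : Continuous fun x : EuclideanSpace ℝ (Fin 3) => (x 0 ^ 2 + x 1 ^ 2) / 4 := by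
    exact (((hcont 0).pow 2).add ((hcont 1).pow 2)).div_const 4
  have hEclosed : IsClosed E := by
    rw [hE]; exact isClosed_le hf (hcont 2)
  -- the open "strict" paraboloid
  set U : Set (EuclideanSpace ℝ (Fin 3)) :=
    {x : EuclideanSpace ℝ (Fin 3) | (x 0 ^ 2 + x 1 ^ 2) / 4 < x 2} with hUdef
  have hUopen : IsOpen U := isOpen_lt hf (hcont 2)
  have hUsub : U ⊆ {x : EuclideanSpace ℝ (Fin 3) | (x 0 ^ 2 + x 1 ^ 2) / 4 ≤ x 2} := by
    rw [hUdef]; exact Set.setOf_subset_setOf.mpr fun z => le_of_lt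
  have hUE : U ⊆ interior E := by
    rw [hE]; exact interior_maximal hUsub hUopen
  have hEstrict : StrictConvex ℝ E := by
    intro x hx y hy hxy a b ha hb hab
    apply hUE
    rw [hE, Set.mem_setOf_eq] at hx hy
    have hco : ∀ i : Fin 3, (a • x + b • y) i = a * x i + b * y i := by
      intro i; simp [PiLp.add_apply, PiLp.smul_apply, smul_eq_mul]
    rw [hUdef, Set.mem_setOf_eq, hco 0, hco 1, hco 2]
    by_cases h0 : x 0 = y 0
    · by_cases h1 : x 1 = y 1
      · have h2 : x 2 ≠ y 2 := by
          intro h2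
          apply hxy
          ext i
          fin_cases i <;> assumption
        rw [h0, h1] at hx ⊢
        rw [← add_mul, hab, one_mul, ← add_mul, hab, one_mul]
        rcases lt_or_gt_of_ne h2 with h | h
        · nlinarith [mul_pos ha (sub_pos.mpr h)]
        · nlinarith [mul_pos hb (sub_pos.mpr h)]
      · have h1' : (x 1 - y 1) ^ 2 > 0 :=
          lt_of_le_of_ne (sq_nonneg _) (Ne.symm (pow_ne_zero 2 (sub_ne_zero_of_ne h1)))
        nlinarith [sq_nonneg (x 0 - y 0), mul_pos ha hb, mul_pos (mul_pos ha hb) h1',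
          mul_le_mul_of_nonneg_left hx ha.le, mul_le_mul_of_nonneg_left hy hb.le]
    · have h0' : (x 0 - y 0) ^ 2 > 0 :=
        lt_of_le_of_ne (sq_nonneg _) (Ne.symm (pow_ne_zero 2 (sub_ne_zero_of_ne h0)))
      nlinarith [sq_nonneg (x 1 - y 1), mul_pos ha hb, mul_pos (mul_pos ha hb) h0',
        mul_le_mul_of_nonneg_left hx ha.le, mul_le_mul_of_nonneg_left hy hb.le]
  refine ⟨?_, ?_, ?_, ?_⟩
  · rw [hK]
    exact (isCompact_closedBall c 4).inter_left hEclosed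
  · rw [hK]
    exact hEstrict.inter (strictConvex_closedBall ℝ c 4)
  · refine ⟨c, ?_⟩
    have hsub : U ∩ ball c 4 ⊆ K := by
      rw [hK, hE]
      exact Set.inter_subset_inter hUsub ball_subset_closedBall
    apply interior_maximal hsub (hUopen.inter isOpen_ball)
    constructor
    · rw [hUdef, Set.mem_setOf_eq, hc0, hc1, hc2]; norm_num
    · exact mem_ball_self (by norm_num)
  · have hdist : dist (0 : EuclideanSpace ℝ (Fin 3)) c = 4 := by
      rw [EuclideanSpace.dist_eq]
      rw [Fin.sum_univ_three]
      simp only [hc0, hc1, hc2]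
      norm_num
    have hKclosed : IsClosed K := by
      rw [hK]; exact hEclosed.inter isClosed_closedBall
    rw [hKclosed.frontier_eq]
    constructor
    · rw [hK, hE]
      constructor
      · simp [Set.mem_setOf_eq]
      · rw [mem_closedBall, hdist]
    · intro h0
      have : (0 : EuclideanSpace ℝ (Fin 3)) ∈ ball c 4 := by
        have hsub : interior K ⊆ ball c 4 := by
          rw [← interior_closedBall c (by norm_num : (4:ℝ) ≠ 0)]
          exact interior_mono (by rw [hK]; exact Set.inter_subset_right)
        exact hsub h0
      rw [mem_ball, hdist] at this
      exact absurd this (by norm_num)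
end

section
/- There exists a compact strictly convex set V ⊆ ℝ³ (with coordinates (y₁, y₂, z)) with nonempty interior such that: (i) 0 ∈ frontier V; (ii) V ⊆ {(y₁,y₂,z) : z ≥ 0} and V ∩ {(y₁,y₂,z) : z = 0} = {0}; (iii) V ∩ {(y₁,y₂,z) : z ≤ 1} = {(y₁,y₂,z) : (y₁² + y₂²)/4 ≤ z ≤ 1}; (iv) V = ⋃_{λ ∈ [0,1]} λ • (frontier V), and (λ • frontier V) ∩ (μ • frontier V) = {0} whenever 0 < λ < μ ≤ 1; (v) the Lebesgue (outer) measure of ⋃_{λ ∈ (1/2, 3/4]} λ • (frontier V) is at least (19/64)·volume(V), which is strictly positive. -/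
open scoped Pointwise

open MeasureTheory
open scoped ENNReal

namespace Stmt16Aux

abbrev E := EuclideanSpace ℝ (Fin 3)

/-- The clam body: solid region between the paraboloid `z = (y₁²+y₂²)/4`
and its reflection `z = 2 - (y₁²+y₂²)/4`. -/
def V : Set E := {x | (x 0 ^ 2 + x 1 ^ 2) / 4 ≤ x 2 ∧ x 2 ≤ 2 - (x 0 ^ 2 + x 1 ^ 2) / 4}

/-- The strict-inequality open core of `V`. -/
def O : Set E := {x | (x 0 ^ 2 + x 1 ^ 2) / 4 < x 2 ∧ x 2 < 2 - (x 0 ^ 2 + x 1 ^ 2) / 4}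

lemma contc (i : Fin 3) : Continuous fun x : E => x i := (EuclideanSpace.proj i).continuous

lemma contf : Continuous fun x : E => (x 0 ^ 2 + x 1 ^ 2) / 4 := by fun_prop

lemma V_closed : IsClosed V :=
  (isClosed_le contf (contc 2)).inter (isClosed_le (contc 2) (continuous_const.sub contf))

lemma O_open : IsOpen O :=
  (isOpen_lt contf (contc 2)).inter (isOpen_lt (contc 2) (continuous_const.sub contf))

lemma O_sub_V : O ⊆ V := fun _ hx => ⟨hx.1.le, hx.2.le⟩

lemma O_sub_int : O ⊆ interior V := interior_maximal O_sub_V O_open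

lemma zero_coords (i : Fin 3) : (0 : E) i = 0 := rfl

lemma zero_mem_V : (0 : E) ∈ V := by simp [V, zero_coords]

lemma V_strict : StrictConvex ℝ V := by
  intro x hx y hy hxy a b ha hb hab
  apply O_sub_int
  obtain ⟨hx1, hx2⟩ := hx
  obtain ⟨hy1, hy2⟩ := hy
  have hz : ∀ i : Fin 3, (a • x + b • y) i = a * x i + b * y i := fun i => rfl
  have hne : ¬ (x 0 = y 0 ∧ x 1 = y 1 ∧ x 2 = y 2) := by
    rintro ⟨h0, h1, h2⟩
    exact hxy (PiLp.ext fun i => by fin_cases i <;> assumption)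
  simp only [O, Set.mem_setOf_eq, hz]
  by_cases hc : x 0 = y 0 ∧ x 1 = y 1
  · obtain ⟨h0, h1⟩ := hc
    have h2 : x 2 ≠ y 2 := fun h => hne ⟨h0, h1, h⟩
    have e0 : a * x 0 + b * y 0 = y 0 := by rw [h0]; linear_combination y 0 * hab
    have e1 : a * x 1 + b * y 1 = y 1 := by rw [h1]; linear_combination y 1 * hab
    rw [h0, h1] at hx1 hx2
    rw [e0, e1]
    have k1 : a * x 2 + b * y 2 = x 2 + b * (y 2 - x 2) := by linear_combination x 2 * hab
    have k2 : a * x 2 + b * y 2 = y 2 + a * (x 2 - y 2) := by linear_combination y 2 * hab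
    rcases lt_or_gt_of_ne h2 with h | h
    · have p1 : 0 < b * (y 2 - x 2) := mul_pos hb (by linarith)
      have p2 : a * (x 2 - y 2) < 0 := mul_neg_of_pos_of_neg ha (by linarith)
      constructor <;> linarith
    · have p1 : 0 < a * (x 2 - y 2) := mul_pos ha (by linarith)
      have p2 : b * (y 2 - x 2) < 0 := mul_neg_of_pos_of_neg hb (by linarith)
      constructor <;> linarith
  · have hd : 0 < (x 0 - y 0) ^ 2 + (x 1 - y 1) ^ 2 := by
      rcases not_and_or.mp hc with h | h
      · have h' : 0 < (x 0 - y 0) ^ 2 :=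
          lt_of_le_of_ne (sq_nonneg _) (Ne.symm (pow_ne_zero 2 (sub_ne_zero.mpr h)))
        nlinarith [sq_nonneg (x 1 - y 1)]
      · have h' : 0 < (x 1 - y 1) ^ 2 :=
          lt_of_le_of_ne (sq_nonneg _) (Ne.symm (pow_ne_zero 2 (sub_ne_zero.mpr h)))
        nlinarith [sq_nonneg (x 0 - y 0)]
    have key : ((a * x 0 + b * y 0) ^ 2 + (a * x 1 + b * y 1) ^ 2)
        = a * (x 0 ^ 2 + x 1 ^ 2) + b * (y 0 ^ 2 + y 1 ^ 2)
          - a * b * ((x 0 - y 0) ^ 2 + (x 1 - y 1) ^ 2) := by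
      linear_combination (a * (x 0 ^ 2 + x 1 ^ 2) + b * (y 0 ^ 2 + y 1 ^ 2)) * hab
    have habd : 0 < a * b * ((x 0 - y 0) ^ 2 + (x 1 - y 1) ^ 2) := by positivity
    have hax : a * ((x 0 ^ 2 + x 1 ^ 2) / 4) ≤ a * x 2 := mul_le_mul_of_nonneg_left hx1 ha.le
    have hby : b * ((y 0 ^ 2 + y 1 ^ 2) / 4) ≤ b * y 2 := mul_le_mul_of_nonneg_left hy1 hb.le
    have hax2 : a * x 2 ≤ a * (2 - (x 0 ^ 2 + x 1 ^ 2) / 4) := mul_le_mul_of_nonneg_left hx2 ha.le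
    have hby2 : b * y 2 ≤ b * (2 - (y 0 ^ 2 + y 1 ^ 2) / 4) := mul_le_mul_of_nonneg_left hy2 hb.le
    rw [key]
    constructor
    · nlinarith [hax, hby, habd]
    · nlinarith [hax2, hby2, habd, hab]

lemma V_compact : IsCompact V := by
  apply Metric.isCompact_of_isClosed_isBounded V_closed
  apply Bornology.IsBounded.subset (Metric.isBounded_closedBall (x := (0:E)) (r := 4))
  intro x hx
  obtain ⟨h1, h2⟩ := hx
  have hs : x 0 ^ 2 + x 1 ^ 2 ≤ 4 := by nlinarith
  have hz : 0 ≤ x 2 ∧ x 2 ≤ 2 := ⟨by nlinarith, by nlinarith⟩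
  simp only [Metric.mem_closedBall, dist_zero_right]
  rw [EuclideanSpace.norm_eq]
  rw [show (4:ℝ) = Real.sqrt 16 by rw [show (16:ℝ) = 4^2 by norm_num, Real.sqrt_sq (by norm_num)]]
  apply Real.sqrt_le_sqrt
  rw [Fin.sum_univ_three]
  simp only [Real.norm_eq_abs, sq_abs]
  nlinarith [hz.1, hz.2]

lemma zero_mem_frontier : (0 : E) ∈ frontier V := by
  rw [V_closed.frontier_eq]
  refine ⟨zero_mem_V, fun hint => ?_⟩
  obtain ⟨ε, hε, hball⟩ := Metric.isOpen_iff.mp isOpen_interior 0 hint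
  set q : E := EuclideanSpace.single 2 (-(ε/2)) with hq
  have hqmem : q ∈ V := interior_subset (hball (by
    simp only [Metric.mem_ball, dist_zero_right, hq, EuclideanSpace.norm_single]
    rw [Real.norm_eq_abs, abs_neg, abs_of_pos (by linarith)]
    linarith))
  have hq2 : q 2 = -(ε/2) := by simp [hq, EuclideanSpace.single_apply]
  have := hqmem.1
  have h0 : (0:ℝ) ≤ (q 0 ^ 2 + q 1 ^ 2) / 4 := by positivity
  rw [hq2] at this
  linarith

lemma V_sub_half : V ⊆ {x : E | 0 ≤ x 2} := fun x hx => le_trans (by positivity) hx.1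

lemma V_cap_zero : V ∩ {x : E | x 2 = 0} = {0} := by
  ext x
  constructor
  · rintro ⟨⟨h1, _⟩, h3⟩
    simp only [Set.mem_setOf_eq] at h3
    rw [h3] at h1
    have e0 : x 0 = 0 := by nlinarith [sq_nonneg (x 0), sq_nonneg (x 1)]
    have e1 : x 1 = 0 := by nlinarith [sq_nonneg (x 0), sq_nonneg (x 1)]
    exact PiLp.ext fun i => by fin_cases i <;> simpa [zero_coords]
  · rintro rfl
    exact ⟨zero_mem_V, rfl⟩

lemma V_cap_one : V ∩ {x : E | x 2 ≤ 1} = {x : E | (x 0 ^ 2 + x 1 ^ 2) / 4 ≤ x 2 ∧ x 2 ≤ 1} := by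
  ext x
  constructor
  · rintro ⟨⟨h1, _⟩, h3⟩
    exact ⟨h1, h3⟩
  · rintro ⟨h1, h2⟩
    exact ⟨⟨h1, by nlinarith⟩, h2⟩

lemma star_mem {a : ℝ} (h0 : 0 ≤ a) (h1 : a ≤ 1) {x : E} (hx : x ∈ V) : a • x ∈ V := by
  have h := V_strict.convex hx zero_mem_V h0 (by linarith : (0:ℝ) ≤ 1 - a) (by ring)
  simpa using h

lemma frontier_sub_V : frontier V ⊆ V := V_closed.frontier_subset

lemma ray_hits_frontier {x : E} (hx : x ∈ V) (hx0 : x ≠ 0) :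
    ∃ c : ℝ, 1 ≤ c ∧ c • x ∈ frontier V := by
  set T := {t : ℝ | 1 ≤ t ∧ t • x ∈ V} with hT
  have hT1 : (1:ℝ) ∈ T := ⟨le_refl 1, by simpa⟩
  obtain ⟨R, hR⟩ := isBounded_iff_forall_norm_le.mp V_compact.isBounded
  have hxpos : 0 < ‖x‖ := norm_pos_iff.mpr hx0
  have hbdd : BddAbove T := by
    refine ⟨R / ‖x‖, fun t ht => ?_⟩
    have h1 := hR _ ht.2
    rw [norm_smul, Real.norm_eq_abs, abs_of_pos (by linarith [ht.1] : (0:ℝ) < t)] at h1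
    exact (le_div_iff₀ hxpos).mpr h1
  have hTclosed : IsClosed T := by
    apply IsClosed.inter
    · exact isClosed_le continuous_const continuous_id
    · exact V_closed.preimage (continuous_id.smul continuous_const)
  have hcT : sSup T ∈ T := hTclosed.csSup_mem ⟨1, hT1⟩ hbdd
  refine ⟨sSup T, hcT.1, ?_⟩
  rw [V_closed.frontier_eq]
  refine ⟨hcT.2, fun hint => ?_⟩
  have hcont : ContinuousAt (fun t : ℝ => t • x) (sSup T) :=
    (continuous_id.smul continuous_const).continuousAt
  have hev : ∀ᶠ t in nhds (sSup T), t • x ∈ interior V :=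
    hcont.eventually_mem (isOpen_interior.mem_nhds hint)
  obtain ⟨ε, hε, hb⟩ := Metric.eventually_nhds_iff.mp hev
  have hmem : (sSup T + ε/2) ∈ T := by
    refine ⟨by linarith [hcT.1], interior_subset (hb ?_)⟩
    rw [Real.dist_eq, add_sub_cancel_left, abs_of_pos (by linarith)]
    linarith
  have := le_csSup hbdd hmem
  linarith

lemma foliation_mem {x : E} (hx : x ∈ V) :
    ∃ lam ∈ Set.Icc (0:ℝ) 1, x ∈ lam • frontier V := by
  by_cases hx0 : x = 0
  · exact ⟨1, ⟨zero_le_one, le_refl 1⟩, ⟨0, zero_mem_frontier, by simp [hx0]⟩⟩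
  · obtain ⟨c, hc1, hcf⟩ := ray_hits_frontier hx hx0
    have hc0 : (0:ℝ) < c := by linarith
    refine ⟨c⁻¹, ⟨by positivity, inv_le_one_of_one_le₀ hc1⟩, ⟨c • x, hcf, ?_⟩⟩
    show c⁻¹ • c • x = x
    rw [smul_smul, inv_mul_cancel₀ (ne_of_gt hc0), one_smul]

lemma foliation_eq : V = ⋃ lam ∈ Set.Icc (0 : ℝ) 1, lam • frontier V := by
  ext x
  simp only [Set.mem_iUnion, exists_prop]
  constructor
  · intro hx
    obtain ⟨lam, hlam, hmem⟩ := foliation_mem hx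
    exact ⟨lam, hlam, hmem⟩
  · rintro ⟨lam, ⟨h0, h1⟩, y, hy, rfl⟩
    exact star_mem h0 h1 (frontier_sub_V hy)

lemma disjoint_folia (lam mu : ℝ) (h0 : 0 < lam) (hlm : lam < mu) (hmu1 : mu ≤ 1) :
    (lam • frontier V) ∩ (mu • frontier V) = {0} := by
  ext z
  constructor
  · rintro ⟨⟨p, hp, rfl⟩, ⟨q, hq, hqe⟩⟩
    by_contra hz0
    have hp0 : p ≠ 0 := fun h => hz0 (by simp [h])
    have hmu0 : (0:ℝ) < mu := lt_trans h0 hlm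
    have hqe' : mu • q = lam • p := hqe
    have hqp : q = (mu⁻¹ * lam) • p := by
      rw [← smul_smul, ← hqe', smul_smul, inv_mul_cancel₀ (ne_of_gt hmu0), one_smul]
    set t : ℝ := mu⁻¹ * lam with ht
    have ht0 : 0 < t := by positivity
    have ht1 : t < 1 := by
      rw [ht]
      rw [inv_mul_lt_iff₀ hmu0, mul_one]
      exact hlm
    have hint : q ∈ interior V :=
      by simpa [hqp] using
        V_strict (frontier_sub_V hp) zero_mem_V hp0 ht0 (by linarith : (0:ℝ) < 1 - t) (by ring)
    rw [V_closed.frontier_eq] at hq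
    exact hq.2 hint
  · rintro rfl
    exact ⟨⟨0, zero_mem_frontier, smul_zero _⟩, ⟨0, zero_mem_frontier, smul_zero _⟩⟩

lemma union_eq :
    (⋃ lam ∈ Set.Ioc (1 / 2 : ℝ) (3 / 4), lam • frontier V) =
      ((3/4 : ℝ) • V \ (1/2 : ℝ) • V) ∪ {0} := by
  ext z
  simp only [Set.mem_iUnion, Set.mem_union, Set.mem_singleton_iff, Set.mem_diff, exists_prop]
  constructor
  · rintro ⟨lam, ⟨hl1, hl2⟩, p, hp, rfl⟩
    by_cases hz0 : lam • p = 0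
    · exact Or.inr hz0
    · left
      constructor
      · refine ⟨(4 * lam / 3) • p, star_mem (by linarith) (by linarith) (frontier_sub_V hp), ?_⟩
        show (3/4 : ℝ) • (4 * lam / 3) • p = lam • p
        rw [smul_smul]; congr 1; ring
      · rintro ⟨v, hv, hev⟩
        have hev : (1/2 : ℝ) • v = lam • p := hev
        obtain ⟨mu, ⟨hm0, hm1⟩, q, hq, rfl⟩ := foliation_mem hv
        have hmu0 : 0 < mu := by
          rcases lt_or_eq_of_le hm0 with h | h
          · exact h
          · exfalso; apply hz0; rw [← hev, ← h]
            show (1/2 : ℝ) • (0:ℝ) • q = 0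
            simp
        have hmem : lam • p ∈ ((mu/2) • frontier V) ∩ (lam • frontier V) := by
          refine ⟨⟨q, hq, ?_⟩, ⟨p, hp, rfl⟩⟩
          show (mu/2 : ℝ) • q = lam • p
          rw [← hev, smul_smul]
          show (mu/2 : ℝ) • q = (1/2 * mu : ℝ) • q
          congr 1; ring
        rw [disjoint_folia (mu/2) lam (by linarith) (by linarith) (by linarith)] at hmem
        exact hz0 hmem
  · rintro (⟨⟨v, hv, rfl⟩, hnot⟩ | rfl)
    · obtain ⟨mu, ⟨hm0, hm1⟩, q, hq, rfl⟩ := foliation_mem hv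
      have hz0 : (3/4 : ℝ) • mu • q ≠ 0 := by
        intro h
        exact hnot ⟨0, zero_mem_V,
          by show (1/2:ℝ) • (0:E) = (3/4 : ℝ) • mu • q; rw [smul_zero, h]⟩
      have hmu0 : 0 < mu := by
        rcases lt_or_eq_of_le hm0 with h | h
        · exact h
        · exfalso; apply hz0; rw [← h]
          show (3/4 : ℝ) • (0:ℝ) • q = 0
          simp
      have hmugt : 2/3 < mu := by
        by_contra hle
        push_neg at hle
        apply hnot
        refine ⟨(3 * mu / 2) • q, star_mem (by linarith) (by linarith) (frontier_sub_V hq), ?_⟩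
        show (1/2 : ℝ) • (3 * mu / 2) • q = (3/4 : ℝ) • mu • q
        rw [smul_smul, smul_smul]; congr 1; ring
      refine ⟨3 * mu / 4, ⟨by linarith, by linarith⟩, q, hq, ?_⟩
      show (3 * mu / 4 : ℝ) • q = (3/4 : ℝ) • mu • q
      rw [smul_smul]; congr 1; ring
    · exact ⟨3/4, ⟨by norm_num, le_refl _⟩, 0, zero_mem_frontier, smul_zero _⟩

lemma smul_V_vol (r : ℝ) (hr : 0 ≤ r) :
    volume ((r : ℝ) • V) = ENNReal.ofReal (r ^ 3) * volume V := by
  rw [Measure.addHaar_smul volume r V]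
  congr 2
  rw [finrank_euclideanSpace_fin, abs_of_nonneg (pow_nonneg hr 3)]

lemma half_sub : (1/2 : ℝ) • V ⊆ (3/4 : ℝ) • V := by
  rintro x ⟨v, hv, rfl⟩
  refine ⟨(2/3 : ℝ) • v, star_mem (by norm_num) (by norm_num) hv, ?_⟩
  show (3/4 : ℝ) • (2/3 : ℝ) • v = (1/2 : ℝ) • v
  rw [smul_smul]; congr 1; norm_num

lemma vol_diff :
    volume ((3/4 : ℝ) • V \ (1/2 : ℝ) • V) = (19/64 : ℝ≥0∞) * volume V := by
  have hmeas : MeasurableSet ((3/4 : ℝ) • V \ (1/2 : ℝ) • V) := by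
    have h1 : IsCompact ((3/4 : ℝ) • V) := V_compact.image (continuous_const_smul _)
    have h2 : IsCompact ((1/2 : ℝ) • V) := V_compact.image (continuous_const_smul _)
    exact h1.isClosed.measurableSet.diff h2.isClosed.measurableSet
  have hunion : (1/2 : ℝ) • V ∪ ((3/4 : ℝ) • V \ (1/2 : ℝ) • V) = (3/4 : ℝ) • V :=
    Set.union_diff_cancel half_sub
  have hdisj : Disjoint ((1/2 : ℝ) • V) ((3/4 : ℝ) • V \ (1/2 : ℝ) • V) :=
    Set.disjoint_sdiff_right
  have hsum := measure_union (μ := volume) hdisj hmeas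
  rw [hunion] at hsum
  rw [smul_V_vol _ (by norm_num), smul_V_vol _ (by norm_num)] at hsum
  have e34 : ENNReal.ofReal ((3/4 : ℝ) ^ 3) = (27/64 : ℝ≥0∞) := by
    rw [show ((3:ℝ)/4) ^ 3 = 27/64 by norm_num]
    rw [ENNReal.ofReal_div_of_pos (by norm_num)]
    norm_num
  have e12 : ENNReal.ofReal ((1/2 : ℝ) ^ 3) = (8/64 : ℝ≥0∞) := by
    rw [show ((1:ℝ)/2) ^ 3 = 8/64 by norm_num]
    rw [ENNReal.ofReal_div_of_pos (by norm_num)]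
    norm_num
  rw [e34, e12] at hsum
  have hfin : (8/64 : ℝ≥0∞) * volume V ≠ ⊤ :=
    ENNReal.mul_ne_top ((ENNReal.div_lt_top (by norm_num) (by norm_num)).ne)
      V_compact.measure_lt_top.ne
  have hsplit : (27/64 : ℝ≥0∞) * volume V
      = (8/64 : ℝ≥0∞) * volume V + (19/64 : ℝ≥0∞) * volume V := by
    rw [← add_mul]
    congr 1
    rw [ENNReal.div_add_div_same]
    norm_num
  rw [hsplit] at hsum
  exact ((ENNReal.add_right_inj hfin).mp hsum).symm

lemma int_nonempty : (interior V).Nonempty := by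
  refine ⟨EuclideanSpace.single 2 (1:ℝ), O_sub_int ?_⟩
  constructor <;> simp [O, EuclideanSpace.single_apply]

lemma vol_pos : 0 < volume V :=
  lt_of_lt_of_le (isOpen_interior.measure_pos volume int_nonempty)
    (measure_mono interior_subset)

end Stmt16Aux

/-- Core of Proposition 3.1 ("slicing by clams"): there is a compact
strictly convex body `V ⊆ ℝ³` with nonempty interior, touching the halfspace boundary
`{z = 0}` only at `0 ∈ frontier V`, whose bottom part (`z ≤ 1`) is exactly the solid
paraboloid `{(y₁,y₂,z) : (y₁²+y₂²)/4 ≤ z ≤ 1}`, which is foliated by the dilates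
`λ • frontier V`, `λ ∈ [0,1]`, pairwise meeting in `{0}`, and such that the union of the
folia over `λ ∈ (1/2, 3/4]` has volume at least `(19/64) · volume V > 0`. -/
theorem stmt_16 :
    ∃ V : Set (EuclideanSpace ℝ (Fin 3)),
      IsCompact V ∧ StrictConvex ℝ V ∧ (interior V).Nonempty ∧
      (0 : EuclideanSpace ℝ (Fin 3)) ∈ frontier V ∧
      V ⊆ {x : EuclideanSpace ℝ (Fin 3) | 0 ≤ x 2} ∧
      V ∩ {x : EuclideanSpace ℝ (Fin 3) | x 2 = 0} = {0} ∧
      V ∩ {x : EuclideanSpace ℝ (Fin 3) | x 2 ≤ 1} =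
        {x : EuclideanSpace ℝ (Fin 3) | (x 0 ^ 2 + x 1 ^ 2) / 4 ≤ x 2 ∧ x 2 ≤ 1} ∧
      V = ⋃ lam ∈ Set.Icc (0 : ℝ) 1, lam • frontier V ∧
      (∀ lam mu : ℝ, 0 < lam → lam < mu → mu ≤ 1 →
        (lam • frontier V) ∩ (mu • frontier V) = {0}) ∧
      (19 / 64 : ℝ≥0∞) * volume V ≤
        volume (⋃ lam ∈ Set.Ioc (1 / 2 : ℝ) (3 / 4), lam • frontier V) ∧
      0 < (19 / 64 : ℝ≥0∞) * volume V := by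
  refine ⟨Stmt16Aux.V, Stmt16Aux.V_compact, Stmt16Aux.V_strict, Stmt16Aux.int_nonempty,
    Stmt16Aux.zero_mem_frontier, Stmt16Aux.V_sub_half, Stmt16Aux.V_cap_zero,
    Stmt16Aux.V_cap_one, Stmt16Aux.foliation_eq, Stmt16Aux.disjoint_folia, ?_, ?_⟩
  · rw [Stmt16Aux.union_eq, ← Stmt16Aux.vol_diff]
    exact measure_mono Set.subset_union_left
  · exact ENNReal.mul_pos (by norm_num) (ne_of_gt Stmt16Aux.vol_pos)
end
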